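/- Let M be a finite Markov chain, ψ a set of states, and p ∈ [0,1]. If C ⊆ FReach(M, s₀, ψ) is a representative counterexample (μ_M(⋃_{σ ∈ C} Cyl(σ)) > p), then Cyl(C) = ⋃_{σ ∈ C} Cyl(σ) is a counterexample to P_{≤p}(◇ψ): it is a measurable subset of { ω | ∃i. ωᵢ ∈ ψ } with probability exceeding p. Conversely, if there exists any measurable counterexample to P_{≤p}(◇ψ), then there exists a representative counterexample (a set of finite paths in FReach with cylinder probability exceeding p). -/

import Mathlib

open scoped ENNReal Classical
open MeasureTheory

namespace CE

variable {S : Type}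

/-- Positive-probability transition (edge of the underlying digraph). -/
def edge (P : S → S → ℝ≥0∞) (s t : S) : Prop := 0 < P s t

/-- Finite path of the Markov chain with transition function `P`, starting at `s`. -/
def IsFPath (P : S → S → ℝ≥0∞) (s : S) (σ : List S) : Prop :=
  σ.head? = some s ∧ σ.Chain' (edge P)

/-- Infinite path of the Markov chain with transition function `P`, starting at `s`. -/
def IsPath (P : S → S → ℝ≥0∞) (s : S) (ω : ℕ → S) : Prop :=
  ω 0 = s ∧ ∀ n, edge P (ω n) (ω (n + 1))

/-- Reachability in the underlying digraph. -/
def Reach (P : S → S → ℝ≥0∞) : S → S → Prop :=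
  Relation.ReflTransGen (edge P)

/-- Same strongly connected component. -/
def sccRel (P : S → S → ℝ≥0∞) (s t : S) : Prop :=
  Reach P s t ∧ Reach P t s

/-- `s` belongs to a nontrivial SCC (more than one state, or a self-loop). -/
def nontriv (P : S → S → ℝ≥0∞) (s : S) : Prop :=
  (∃ t, t ≠ s ∧ sccRel P s t) ∨ edge P s s

/-- Cylinder (cone) of a finite path. -/
def Cyl (ρ : List S) : Set (ℕ → S) := {ω | ∀ i : Fin ρ.length, ω i.1 = ρ.get i}

/-- Finite paths from `s` reaching `A` exactly at their last state. -/
def FReach (P : S → S → ℝ≥0∞) (s : S) (A : Set S) : Set (List S) :=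
  {σ | IsFPath P s σ ∧ (∃ h : σ ≠ [], σ.getLast h ∈ A) ∧ ∀ x ∈ σ.dropLast, x ∉ A}

/-- Infinite sequences that eventually visit `A`. -/
def ReachSet (A : Set S) : Set (ℕ → S) := {ω | ∃ i, ω i ∈ A}

/-- Product of transition probabilities along a finite path. -/
noncomputable def cylProb (P : S → S → ℝ≥0∞) (d : S) (ρ : List S) : ℝ≥0∞ :=
  ∏ i ∈ Finset.range (ρ.length - 1), P (ρ.getD i d) (ρ.getD (i + 1) d)

/-- `σ ⪯_f ω`: subsequence embedding satisfying freshness and inertia w.r.t. `r`. -/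
structure Embeds (r : S → S → Prop) (σ : List S) (ω : ℕ → S) (f : ℕ → ℕ) : Prop where
  mono : ∀ i j, i < j → j < σ.length → f i < f j
  agree : ∀ i : Fin σ.length, σ.get i = ω (f i.1)
  fresh : ∀ i < σ.length, ∀ j < f i, ¬ r (ω (f i)) (ω j)
  inertia : ∀ i, i + 1 < σ.length → ∀ j, f i < j → j < f (i + 1) → r (ω (f i)) (ω j)

/-- There is a path from `s` to `t` staying in the SCC of `s` until `t`. -/
def exitReach (P : S → S → ℝ≥0∞) (s t : S) : Prop :=
  ∃ l : List S, List.Chain (edge P) s (l ++ [t]) ∧ ∀ u ∈ s :: l, sccRel P s u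

/-- The SCC of `s` has no output states. -/
def noOut (P : S → S → ℝ≥0∞) (s : S) : Prop :=
  ∀ u t, sccRel P s u → edge P u t → sccRel P s t

/-- Edges of the acyclic reduction. -/
def AcEdge (P : S → S → ℝ≥0∞) (s t : S) : Prop :=
  (¬ nontriv P s ∧ edge P s t) ∨
  (nontriv P s ∧ ¬ sccRel P s t ∧ exitReach P s t) ∨
  (nontriv P s ∧ t = s ∧ noOut P s)

/-- States of the acyclic reduction: states outside nontrivial SCCs and input states. -/
def AcState (P : S → S → ℝ≥0∞) (s : S) : Prop :=
  ¬ nontriv P s ∨ ∃ t, ¬ sccRel P s t ∧ edge P t s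

/-- A rail: a finite path of the acyclic reduction starting at `s0`. -/
def IsRail (P : S → S → ℝ≥0∞) (s0 : S) (σ : List S) : Prop :=
  σ.head? = some s0 ∧ σ.Chain' (AcEdge P) ∧ ∀ x ∈ σ, AcState P x

/-- The torrent of a rail `σ`: infinite paths into which `σ` embeds. -/
def Torr (P : S → S → ℝ≥0∞) (r : S → S → Prop) (s0 : S) (σ : List S) : Set (ℕ → S) :=
  {ω | IsPath P s0 ω ∧ ∃ f, Embeds r σ ω f}

def toSeq (d : S) (ρ : List S) : ℕ → S := fun n => ρ.getD n d

/-- Torrent generators: finite paths `ρ` with an embedding of `σ` ending at the last state. -/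
def Gen (P : S → S → ℝ≥0∞) (r : S → S → Prop) (s0 : S) (σ : List S) : Set (List S) :=
  {ρ | IsFPath P s0 ρ ∧ ρ ≠ [] ∧ ∃ f, Embeds r σ (toSeq s0 ρ) f ∧
    (∀ i < σ.length, f i < ρ.length) ∧ f (σ.length - 1) = ρ.length - 1}

/-- Finite paths from `t` to `s` staying in the SCC of `t` except the final state `s`. -/
def ExitPaths (P : S → S → ℝ≥0∞) (t s : S) : Set (List S) :=
  {π | π.head? = some t ∧ (∃ h : π ≠ [], π.getLast h = s) ∧ π.Chain' (edge P) ∧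
    ∀ u ∈ π.dropLast, sccRel P t u}

/-- `M_ψ`: make absorbing all states of `A` and all states not reaching `A`. -/
noncomputable def absP (P : S → S → ℝ≥0∞) (A : Set S) : S → S → ℝ≥0∞ := fun s t =>
  if s ∈ A ∨ ¬ ∃ a ∈ A, Reach P s a then (if t = s then 1 else 0) else P s t

/-- Absorbing state. -/
def Absorbing (P : S → S → ℝ≥0∞) (s : S) : Prop :=
  P s s = 1 ∧ ∀ t, t ≠ s → P s t = 0

/-- Output states of the SCC of `k`. -/
def OutK (P : S → S → ℝ≥0∞) (k : S) : Set S :=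
  {t | ¬ sccRel P k t ∧ ∃ u, sccRel P k u ∧ edge P u t}

/-- The chain `M_K` of the SCC of `k`, with the output states made absorbing. -/
noncomputable def PK (P : S → S → ℝ≥0∞) (k : S) : S → S → ℝ≥0∞ := fun s t =>
  if sccRel P k s then P s t else (if t = s then 1 else 0)

/-- Absorbing state of the acyclic reduction: its only edge is a self-loop. -/
def AcAbsorbing (P : S → S → ℝ≥0∞) (s : S) : Prop :=
  AcEdge P s s ∧ ∀ t, AcEdge P s t → t = s

/-!
Members of `FReach` are prefix-free, so their cylinders are pairwise disjoint; each has positive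
probability, so in a probability space any set of them is countable and its union of cylinders
is measurable. Conversely, almost every sequence is a path of the chain, and a path reaching `A`
lies in the cylinder of its shortest prefix ending in `A`; hence `FReach` itself carries at least
the probability of any counterexample.
-/

theorem _root_.Set.PairwiseDisjoint.countable_of_measure_pos {α ι : Type*} [MeasurableSpace α]
    {μ : Measure α} [SFinite μ] {s : Set ι} {f : ι → Set α} (hd : s.PairwiseDisjoint f)
    (hf : ∀ i ∈ s, MeasurableSet (f i)) (hpos : ∀ i ∈ s, 0 < μ (f i)) : s.Countable := by
  have hcount := Measure.countable_meas_pos_of_disjoint_iUnion (μ := μ)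
    (As := fun i : s => f i) (fun i => hf i i.2)
    fun i j hij => hd i.2 j.2 (Subtype.coe_ne_coe.2 hij)
  have huniv : {i : s | 0 < μ (f i)} = Set.univ := Set.eq_univ_of_forall fun i => hpos i i.2
  rw [huniv, Set.countable_univ_iff] at hcount
  exact Set.countable_coe_iff.1 hcount

theorem measurableSet_cyl [MeasurableSpace S] [MeasurableSingletonClass S] (ρ : List S) :
    MeasurableSet (Cyl ρ) := by
  have hcyl : Cyl ρ = ⋂ i : Fin ρ.length, (fun ω : ℕ → S => ω i) ⁻¹' {ρ.get i} := by
    ext ω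
    simp [Cyl]
  rw [hcyl]
  exact .iInter fun i => measurable_pi_apply i.1 (measurableSet_singleton _)

theorem mem_cyl_ofFn (ω : ℕ → S) (n : ℕ) : ω ∈ Cyl (List.ofFn fun i : Fin n => ω i) := by
  simp [Cyl]

theorem isPrefix_of_mem_cyl {ρ σ : List S} {ω : ℕ → S} (hρ : ω ∈ Cyl ρ) (hσ : ω ∈ Cyl σ)
    (hle : ρ.length ≤ σ.length) : ρ <+: σ :=
  List.prefix_iff_getElem.2 ⟨hle, fun i hi => (hρ ⟨i, hi⟩).symm.trans (hσ ⟨i, by omega⟩)⟩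

section

variable {P : S → S → ℝ≥0∞} {s0 : S} {A : Set S}

theorem eq_of_isPrefix_of_mem_fReach {ρ σ : List S} (hρ : ρ ∈ FReach P s0 A)
    (hσ : σ ∈ FReach P s0 A) (hpre : ρ <+: σ) : ρ = σ := by
  obtain ⟨hne, hlastA⟩ := hρ.2.1
  refine hpre.eq_of_length_le (not_lt.1 fun hlt => hσ.2.2 _ ?_ hlastA)
  have hpos : 0 < ρ.length := List.length_pos_iff.2 hne
  have hi : ρ.length - 1 < σ.dropLast.length := by rw [List.length_dropLast]; omega
  rw [List.getLast_eq_getElem, hpre.getElem, ← List.getElem_dropLast hi]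
  exact List.getElem_mem hi

theorem pairwiseDisjoint_cyl_fReach : (FReach P s0 A).PairwiseDisjoint Cyl := by
  intro ρ hρ σ hσ hne
  refine Set.disjoint_left.2 fun ω hωρ hωσ => hne ?_
  rcases le_total ρ.length σ.length with hle | hle
  · exact eq_of_isPrefix_of_mem_fReach hρ hσ (isPrefix_of_mem_cyl hωρ hωσ hle)
  · exact (eq_of_isPrefix_of_mem_fReach hσ hρ (isPrefix_of_mem_cyl hωσ hωρ hle)).symm

theorem cyl_subset_reachSet {ρ : List S} (hρ : ρ ∈ FReach P s0 A) : Cyl ρ ⊆ ReachSet A := by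
  obtain ⟨hne, hlastA⟩ := hρ.2.1
  have hi : ρ.length - 1 < ρ.length := by
    have := List.length_pos_iff.2 hne
    omega
  intro ω hω
  refine ⟨ρ.length - 1, ?_⟩
  rwa [hω ⟨_, hi⟩, List.get_eq_getElem, ← List.getLast_eq_getElem hne]

theorem cylProb_pos (d : S) {ρ : List S} (hρ : ρ.IsChain (edge P)) : 0 < cylProb P d ρ := by
  refine CanonicallyOrderedAdd.prod_pos.2 fun i hi => ?_
  rw [Finset.mem_range] at hi
  rw [List.getD_eq_getElem _ _ (by omega), List.getD_eq_getElem _ _ (by omega)]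
  exact List.isChain_iff_getElem.1 hρ i (by omega)

theorem ofFn_mem_fReach {ω : ℕ → S} (hω : IsPath P s0 ω) {n : ℕ} (hn : ω n ∈ A)
    (hmin : ∀ j < n, ω j ∉ A) : (List.ofFn fun j : Fin (n + 1) => ω j) ∈ FReach P s0 A := by
  refine ⟨⟨by simp [hω.1], List.isChain_iff_getElem.2 fun i _ => ?_⟩,
    ⟨by simp, ?_⟩, fun x hx => ?_⟩
  · simpa only [List.getElem_ofFn] using hω.2 i
  · simpa only [List.getLast_eq_getElem, List.getElem_ofFn, List.length_ofFn,
      add_tsub_cancel_right] using hn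
  · obtain ⟨j, hj, rfl⟩ := List.mem_iff_getElem.1 hx
    simp only [List.length_dropLast, List.length_ofFn, add_tsub_cancel_right] at hj
    simpa only [List.getElem_dropLast, List.getElem_ofFn] using hmin j hj

theorem reachSet_inter_isPath_subset :
    ReachSet A ∩ {ω | IsPath P s0 ω} ⊆ ⋃ ρ ∈ FReach P s0 A, Cyl ρ := by
  rintro ω ⟨hreach, hω⟩
  exact Set.mem_biUnion (ofFn_mem_fReach hω (Nat.find_spec hreach) fun j => Nat.find_min hreach)
    (mem_cyl_ofFn ω _)

variable [MeasurableSpace S] {μ : Measure (ℕ → S)}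

theorem measurableSet_biUnion_cyl [MeasurableSingletonClass S] [SFinite μ]
    (hμ : ∀ ρ, IsFPath P s0 ρ → μ (Cyl ρ) = cylProb P s0 ρ) {C : Set (List S)}
    (hC : C ⊆ FReach P s0 A) : MeasurableSet (⋃ ρ ∈ C, Cyl ρ) := by
  refine .biUnion ?_ fun ρ _ => measurableSet_cyl ρ
  refine (pairwiseDisjoint_cyl_fReach.subset hC).countable_of_measure_pos (μ := μ)
    (fun ρ _ => measurableSet_cyl ρ) fun ρ hρ => ?_
  rw [hμ ρ (hC hρ).1]
  exact cylProb_pos s0 (hC hρ).1.2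

theorem measure_le_measure_biUnion_fReach (hsupp : μ {ω | ¬ IsPath P s0 ω} = 0)
    {C : Set (ℕ → S)} (hC : C ⊆ ReachSet A) : μ C ≤ μ (⋃ ρ ∈ FReach P s0 A, Cyl ρ) := by
  refine measure_mono_ae ((measure_eq_zero_iff_ae_notMem.1 hsupp).mono fun ω hω hωC => ?_)
  exact reachSet_inter_isPath_subset ⟨hC hωC, not_not.1 hω⟩

end

/-- a representative counterexample gives a counterexample (a measurable
set of paths reaching `ψ` of probability `> p`), and conversely the existence of a
counterexample gives a representative one. -/
theorem representative_iff_counterexample [MeasurableSpace S] [MeasurableSingletonClass S]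
    (P : S → S → ℝ≥0∞) (s0 : S) (A : Set S) (p : ℝ≥0∞)
    (μ : Measure (ℕ → S)) [IsProbabilityMeasure μ]
    (hμ : ∀ ρ, IsFPath P s0 ρ → μ (Cyl ρ) = cylProb P s0 ρ)
    (hsupp : μ {ω | ¬ IsPath P s0 ω} = 0) :
    (∀ C ⊆ FReach P s0 A, p < μ (⋃ ρ ∈ C, Cyl ρ) →
      (⋃ ρ ∈ C, Cyl ρ) ⊆ ReachSet A ∧ MeasurableSet (⋃ ρ ∈ C, Cyl ρ) ∧
        p < μ (⋃ ρ ∈ C, Cyl ρ)) ∧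
    ((∃ C : Set (ℕ → S), MeasurableSet C ∧ C ⊆ ReachSet A ∧ p < μ C) →
      ∃ C' ⊆ FReach P s0 A, p < μ (⋃ ρ ∈ C', Cyl ρ)) := by
  refine ⟨fun C hC hp => ⟨Set.iUnion₂_subset fun ρ hρ => cyl_subset_reachSet (hC hρ),
    measurableSet_biUnion_cyl hμ hC, hp⟩, ?_⟩
  rintro ⟨C, -, hCA, hp⟩
  exact ⟨FReach P s0 A, subset_rfl, hp.trans_le (measure_le_measure_biUnion_fReach hsupp hCA)⟩

end CE
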